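/- arXiv:2205.14426 — 2 statements merged into one kernel-verified Lean document; each statement's English description precedes it below -/
import Mathlib

section
/- Let Q be a thick non-degenerate generalized quadrangle satisfying property (D): for every point x and every hyperbolic line h of Q, x^⊥ ∩ h ≠ ∅. Then every triad of Q is centric: for any three pairwise distinct points a, b, c one has {a,b,c}^⊥ ≠ ∅. -/
/-- A thick non-degenerate generalized quadrangle (rank-2 polar space):
every point lies on a line, two distinct points lie on at most one common line,
every point off a line is collinear with exactly one point of the line,
every line has at least 3 points, every point lies on at least 3 lines,
and no point is collinear with all points. -/
structure GenQuadrangle where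
  P : Type
  Lines : Set (Set P)
  point_on_line : ∀ p : P, ∃ ℓ ∈ Lines, p ∈ ℓ
  unique_joining : ∀ p q : P, p ≠ q → ∀ ℓ ∈ Lines, ∀ m ∈ Lines,
    p ∈ ℓ → q ∈ ℓ → p ∈ m → q ∈ m → ℓ = m
  gq_axiom : ∀ ℓ ∈ Lines, ∀ p : P, p ∉ ℓ →
    ∃! q, q ∈ ℓ ∧ ∃ m ∈ Lines, p ∈ m ∧ q ∈ m
  thick_lines : ∀ ℓ ∈ Lines, ∃ a b c : P,
    a ∈ ℓ ∧ b ∈ ℓ ∧ c ∈ ℓ ∧ a ≠ b ∧ a ≠ c ∧ b ≠ c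
  thick_points : ∀ p : P, ∃ ℓ m k, ℓ ∈ Lines ∧ m ∈ Lines ∧ k ∈ Lines ∧
    p ∈ ℓ ∧ p ∈ m ∧ p ∈ k ∧ ℓ ≠ m ∧ ℓ ≠ k ∧ m ≠ k
  nondegenerate : ∀ p : P, ∃ q : P, ¬ (p = q ∨ ∃ ℓ ∈ Lines, p ∈ ℓ ∧ q ∈ ℓ)

namespace GenQuadrangle

variable (Q : GenQuadrangle)

/-- Collinearity (with `x ⊥ x` by convention). -/
def Collin (x y : Q.P) : Prop := x = y ∨ ∃ ℓ ∈ Q.Lines, x ∈ ℓ ∧ y ∈ ℓ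

/-- `X^⊥`, the set of points collinear with every point of `X`. -/
def perp (X : Set Q.P) : Set Q.P := {y | ∀ x ∈ X, Q.Collin y x}

theorem collin_symm {Q : GenQuadrangle} {x y : Q.P} (h : Q.Collin x y) : Q.Collin y x := by
  rcases h with h | ⟨ℓ, hℓ, hx, hy⟩
  · exact Or.inl h.symm
  · exact Or.inr ⟨ℓ, hℓ, hy, hx⟩

theorem collin_of_mem {Q : GenQuadrangle} {ℓ : Set Q.P} (hℓ : ℓ ∈ Q.Lines)
    {x y : Q.P} (hx : x ∈ ℓ) (hy : y ∈ ℓ) : Q.Collin x y :=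
  Or.inr ⟨ℓ, hℓ, hx, hy⟩

/-- If `a ⊥ b`, `a ≠ b` and `c` is not collinear with `a`, the GQ axiom provides a
common perp point of `a`, `b`, `c`. -/
theorem center_deg {Q : GenQuadrangle} {a b c : Q.P} (hab : Q.Collin a b) (hne : a ≠ b)
    (hca : ¬ Q.Collin c a) :
    ∃ q, Q.Collin q a ∧ Q.Collin q b ∧ Q.Collin q c := by
  rcases hab with h | ⟨ℓ, hℓ, ha, hb⟩
  · exact absurd h hne
  · have hcℓ : c ∉ ℓ := fun hc => hca (collin_of_mem hℓ hc ha)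
    obtain ⟨q, ⟨hqℓ, m, hm, hcm, hqm⟩, -⟩ := Q.gq_axiom ℓ hℓ c hcℓ
    exact ⟨q, collin_of_mem hℓ hqℓ ha, collin_of_mem hℓ hqℓ hb,
      collin_symm (Or.inr ⟨m, hm, hcm, hqm⟩)⟩

/-- For non-collinear `a, b` there are two non-collinear points in `{a,b}^⊥`. -/
theorem two_noncollinear_perps {Q : GenQuadrangle} {a b : Q.P} (hab : ¬ Q.Collin a b) :
    ∃ u v : Q.P, ¬ Q.Collin u v ∧ Q.Collin a u ∧ Q.Collin b u ∧ Q.Collin a v ∧ Q.Collin b v := by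
  obtain ⟨ℓ₁, ℓ₂, -, h1, h2, -, ha1, ha2, -, h12, -, -⟩ := Q.thick_points a
  have hb1 : b ∉ ℓ₁ := fun hb => hab (collin_of_mem h1 ha1 hb)
  have hb2 : b ∉ ℓ₂ := fun hb => hab (collin_of_mem h2 ha2 hb)
  obtain ⟨u, ⟨huℓ, m, hm, hbm, hum⟩, -⟩ := Q.gq_axiom ℓ₁ h1 b hb1
  obtain ⟨v, ⟨hvℓ, n, hn, hbn, hvn⟩, -⟩ := Q.gq_axiom ℓ₂ h2 b hb2
  have hua : u ≠ a := fun h => hab (collin_symm (Or.inr ⟨m, hm, hbm, h ▸ hum⟩))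
  have hva : v ≠ a := fun h => hab (collin_symm (Or.inr ⟨n, hn, hbn, h ▸ hvn⟩))
  refine ⟨u, v, ?_, collin_of_mem h1 ha1 huℓ, Or.inr ⟨m, hm, hbm, hum⟩,
    collin_of_mem h2 ha2 hvℓ, Or.inr ⟨n, hn, hbn, hvn⟩⟩
  rintro (rfl | ⟨k, hk, huk, hvk⟩)
  · exact h12 (Q.unique_joining u a hua ℓ₁ h1 ℓ₂ h2 huℓ ha1 hvℓ ha2)
  · have hak : a ∉ k := by
      intro hak
      apply h12
      have e1 : ℓ₁ = k := Q.unique_joining a u hua.symm ℓ₁ h1 k hk ha1 huℓ hak huk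
      have e2 : ℓ₂ = k := Q.unique_joining a v hva.symm ℓ₂ h2 k hk ha2 hvℓ hak hvk
      exact e1.trans e2.symm
    obtain ⟨q, -, huniq⟩ := Q.gq_axiom k hk a hak
    have eu : u = q := huniq u ⟨huk, ℓ₁, h1, ha1, huℓ⟩
    have ev : v = q := huniq v ⟨hvk, ℓ₂, h2, ha2, hvℓ⟩
    have huv : u = v := eu.trans ev.symm
    exact h12 (Q.unique_joining u a hua ℓ₁ h1 ℓ₂ h2 huℓ ha1 (huv ▸ hvℓ) ha2)

end GenQuadrangle

/-- If a thick non-degenerate generalized quadrangle satisfies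
property (D) (every point perp meets every hyperbolic line), then every triad is
centric: for any three pairwise distinct points `a, b, c`, `{a,b,c}^⊥ ≠ ∅`. -/
theorem stmt15 (Q : GenQuadrangle)
    (hD : ∀ (x a b : Q.P), ¬ Q.Collin a b →
      ∃ z, z ∈ Q.perp (Q.perp {a, b}) ∧ Q.Collin x z) :
    ∀ a b c : Q.P, a ≠ b → a ≠ c → b ≠ c →
      (Q.perp {a, b, c}).Nonempty := by
  intro a b c hab hac hbc
  have mem3 : ∀ z : Q.P, Q.Collin z a → Q.Collin z b → Q.Collin z c →
      z ∈ Q.perp {a, b, c} := by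
    rintro z h1 h2 h3 x (rfl | rfl | rfl) <;> assumption
  by_cases cab : Q.Collin a b
  · by_cases cac : Q.Collin a c
    · exact ⟨a, mem3 a (Or.inl rfl) cab cac⟩
    · by_cases cbc : Q.Collin b c
      · exact ⟨b, mem3 b (GenQuadrangle.collin_symm cab) (Or.inl rfl) cbc⟩
      · obtain ⟨q, h1, h2, h3⟩ := GenQuadrangle.center_deg cab hab
          (fun h => cac (GenQuadrangle.collin_symm h))
        exact ⟨q, mem3 q h1 h2 h3⟩
  · by_cases cac : Q.Collin a c
    · by_cases cbc : Q.Collin b c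
      · exact ⟨c, mem3 c (GenQuadrangle.collin_symm cac) (GenQuadrangle.collin_symm cbc)
          (Or.inl rfl)⟩
      · obtain ⟨q, h1, h3, h2⟩ := GenQuadrangle.center_deg cac hac
          (fun h => cab (GenQuadrangle.collin_symm h))
        exact ⟨q, mem3 q h1 h2 h3⟩
    · by_cases cbc : Q.Collin b c
      · obtain ⟨q, h2, h3, h1⟩ := GenQuadrangle.center_deg cbc hbc
          (fun h => cab h)
        exact ⟨q, mem3 q h1 h2 h3⟩
      · -- proper triad: use two non-collinear points of {a,b}^⊥ and property (D)
        obtain ⟨u, v, huv, hau, hbu, hav, hbv⟩ :=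
          GenQuadrangle.two_noncollinear_perps cab
        obtain ⟨z, hz, hcz⟩ := hD c u v huv
        have ha' : a ∈ Q.perp {u, v} := by rintro x (rfl | rfl) <;> assumption
        have hb' : b ∈ Q.perp {u, v} := by rintro x (rfl | rfl) <;> assumption
        exact ⟨z, mem3 z (hz a ha') (hz b hb') (GenQuadrangle.collin_symm hcz)⟩
end

section
/- Let S be a non-degenerate thick-lined polar space of rank n ≥ 2 satisfying properties (A) and (B). Then S satisfies property (C): every hyperplane H of S containing {a,b}^⊥ for two non-collinear points a, b is singular, i.e. H = c^⊥ for a point c ∈ {a,b}^{⊥⊥}. -/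
/-- A non-degenerate thick-lined polar space (of rank at least 2), in the
Buekenhout–Shult style: a point-line geometry in which every point lies on a
line, every line has at least 3 points, for every point `p` off a line `ℓ`
either exactly one or all points of `ℓ` are collinear with `p`
(the "one-or-all" axiom), and no point is collinear with all points. -/
structure PolarSpace where
  P : Type
  Lines : Set (Set P)
  pt_nonempty : Nonempty P
  point_on_line : ∀ p : P, ∃ ℓ ∈ Lines, p ∈ ℓ
  thick_lines : ∀ ℓ ∈ Lines, ∃ a b c : P,
    a ∈ ℓ ∧ b ∈ ℓ ∧ c ∈ ℓ ∧ a ≠ b ∧ a ≠ c ∧ b ≠ c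
  one_or_all : ∀ ℓ ∈ Lines, ∀ p : P, p ∉ ℓ →
    (∃! q, q ∈ ℓ ∧ (p = q ∨ ∃ m ∈ Lines, p ∈ m ∧ q ∈ m)) ∨
    (∀ q ∈ ℓ, p = q ∨ ∃ m ∈ Lines, p ∈ m ∧ q ∈ m)
  nondegenerate : ∀ p : P, ∃ q : P, ¬ (p = q ∨ ∃ m ∈ Lines, p ∈ m ∧ q ∈ m)

namespace PolarSpace

variable (Γ : PolarSpace)

/-- Collinearity (with `x ⊥ x` by convention). -/
def Collin (x y : Γ.P) : Prop := x = y ∨ ∃ ℓ ∈ Γ.Lines, x ∈ ℓ ∧ y ∈ ℓ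

/-- `X^⊥`, the set of points collinear with every point of `X`. -/
def perp (X : Set Γ.P) : Set Γ.P := {y | ∀ x ∈ X, Γ.Collin y x}

/-- A subspace: a set of points meeting every line not contained in it in at
most one point. -/
def IsSubspace (X : Set Γ.P) : Prop :=
  ∀ ℓ ∈ Γ.Lines, ∀ x ∈ ℓ ∩ X, ∀ y ∈ ℓ ∩ X, x ≠ y → ℓ ⊆ X

/-- A singular subspace: a subspace whose points are pairwise collinear. -/
def IsSingular (X : Set Γ.P) : Prop :=
  Γ.IsSubspace X ∧ ∀ x ∈ X, ∀ y ∈ X, Γ.Collin x y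

/-- A generator: a maximal singular subspace. -/
def IsGenerator (M : Set Γ.P) : Prop :=
  Γ.IsSingular M ∧ ∀ X : Set Γ.P, Γ.IsSingular X → M ⊆ X → X = M

/-- A geometric hyperplane `N` of a singular subspace `M`: a proper subspace of
`M` meeting every line contained in `M`. -/
def IsHypOf (N M : Set Γ.P) : Prop :=
  N ⊆ M ∧ N ≠ M ∧ Γ.IsSubspace N ∧ ∀ ℓ ∈ Γ.Lines, ℓ ⊆ M → (ℓ ∩ N).Nonempty

/-- A sub-generator: a geometric hyperplane of some generator
(a singular subspace of rank `n - 1`). -/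
def IsSubGen (N : Set Γ.P) : Prop := ∃ M, Γ.IsGenerator M ∧ Γ.IsHypOf N M

/-- A hyperplane of the polar space: a proper subspace meeting every line. -/
def IsHyperplane (H : Set Γ.P) : Prop :=
  Γ.IsSubspace H ∧ H ≠ Set.univ ∧ ∀ ℓ ∈ Γ.Lines, (ℓ ∩ H).Nonempty

/-- `N` is a generator of the (sub-)polar space on the point set `T`: a maximal
singular subspace among those contained in `T`. -/
def GeneratorOf (N T : Set Γ.P) : Prop :=
  N ⊆ T ∧ Γ.IsSingular N ∧ ∀ X : Set Γ.P, Γ.IsSingular X → X ⊆ T → N ⊆ X → X = N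

end PolarSpace

namespace PolarSpace

variable {Γ : PolarSpace}

lemma collin_refl (x : Γ.P) : Γ.Collin x x := Or.inl rfl

lemma collin_of_mem {ℓ : Set Γ.P} (hℓ : ℓ ∈ Γ.Lines) {x y : Γ.P} (hx : x ∈ ℓ) (hy : y ∈ ℓ) :
    Γ.Collin x y := Or.inr ⟨ℓ, hℓ, hx, hy⟩

lemma Collin.symm {x y : Γ.P} (h : Γ.Collin x y) : Γ.Collin y x := by
  rcases h with rfl | ⟨ℓ, hℓ, hx, hy⟩
  · exact Or.inl rfl
  · exact Or.inr ⟨ℓ, hℓ, hy, hx⟩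

lemma not_collin_symm {x y : Γ.P} (h : ¬ Γ.Collin x y) : ¬ Γ.Collin y x :=
  fun h' => h h'.symm

lemma line_exists {x y : Γ.P} (h : Γ.Collin x y) (hne : x ≠ y) :
    ∃ ℓ ∈ Γ.Lines, x ∈ ℓ ∧ y ∈ ℓ := by
  rcases h with rfl | h
  · exact absurd rfl hne
  · exact h

lemma proj {ℓ : Set Γ.P} (hℓ : ℓ ∈ Γ.Lines) {p x : Γ.P} (hx : x ∈ ℓ) (hpx : ¬ Γ.Collin p x) :
    ∃ z ∈ ℓ, Γ.Collin p z ∧ ∀ z' ∈ ℓ, Γ.Collin p z' → z' = z := by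
  have hp : p ∉ ℓ := fun hp => hpx (collin_of_mem hℓ hp hx)
  rcases Γ.one_or_all ℓ hℓ p hp with ⟨z, ⟨hz, hpz⟩, hu⟩ | hall
  · exact ⟨z, hz, hpz, fun z' hz' hpz' => hu z' ⟨hz', hpz'⟩⟩
  · exact absurd (hall x hx) hpx

lemma two_implies_all {ℓ : Set Γ.P} (hℓ : ℓ ∈ Γ.Lines) {x y p : Γ.P} (hx : x ∈ ℓ) (hy : y ∈ ℓ)
    (hxy : x ≠ y) (hpx : Γ.Collin p x) (hpy : Γ.Collin p y) : ∀ z ∈ ℓ, Γ.Collin p z := by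
  intro z hz
  by_cases hp : p ∈ ℓ
  · exact collin_of_mem hℓ hp hz
  rcases Γ.one_or_all ℓ hℓ p hp with ⟨q, _, hu⟩ | hall
  · exact absurd ((hu x ⟨hx, hpx⟩).trans (hu y ⟨hy, hpy⟩).symm) hxy
  · exact hall z hz

lemma mem_perp_pair {a b y : Γ.P} : y ∈ Γ.perp {a, b} ↔ Γ.Collin y a ∧ Γ.Collin y b := by
  constructor
  · intro h
    exact ⟨h a (Set.mem_insert a {b}), h b (Set.mem_insert_of_mem a rfl)⟩
  · rintro ⟨h1, h2⟩ x hx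
    rcases hx with rfl | hx
    · exact h1
    · rw [Set.mem_singleton_iff] at hx; subst hx; exact h2

lemma mem_perp_singleton {c y : Γ.P} : y ∈ Γ.perp {c} ↔ Γ.Collin y c := by
  constructor
  · intro h; exact h c rfl
  · intro h x hx
    rw [Set.mem_singleton_iff] at hx; subst hx; exact h

lemma perp_pair_comm (a b : Γ.P) : Γ.perp {a, b} = Γ.perp {b, a} := by
  rw [Set.pair_comm]

lemma perp_isSubspace (X : Set Γ.P) : Γ.IsSubspace (Γ.perp X) := by
  intro ℓ hℓ x hx y hy hxy z hz q hq
  exact (two_implies_all hℓ hx.1 hy.1 hxy (hx.2 q hq).symm (hy.2 q hq).symm z hz).symm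

lemma subspace_line_subset {T ℓ : Set Γ.P} (hT : Γ.IsSubspace T) (hℓ : ℓ ∈ Γ.Lines)
    {x y : Γ.P} (hx : x ∈ ℓ) (hxT : x ∈ T) (hy : y ∈ ℓ) (hyT : y ∈ T) (hxy : x ≠ y) : ℓ ⊆ T :=
  hT ℓ hℓ x ⟨hx, hxT⟩ y ⟨hy, hyT⟩ hxy

lemma eq_of_mem_subspace {T ℓ : Set Γ.P} (hT : Γ.IsSubspace T) (hℓ : ℓ ∈ Γ.Lines)
    {x z z' : Γ.P} (hx : x ∈ ℓ) (hxT : x ∉ T) (hz : z ∈ ℓ) (hzT : z ∈ T)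
    (hz' : z' ∈ ℓ) (hz'T : z' ∈ T) : z = z' := by
  by_contra hne
  exact hxT (subspace_line_subset hT hℓ hz hzT hz' hz'T hne hx)

lemma line_nonempty {ℓ : Set Γ.P} (hℓ : ℓ ∈ Γ.Lines) : ℓ.Nonempty := by
  obtain ⟨p, q, r, hp, -⟩ := Γ.thick_lines ℓ hℓ
  exact ⟨p, hp⟩

lemma third_point {ℓ : Set Γ.P} (hℓ : ℓ ∈ Γ.Lines) (x y : Γ.P) :
    ∃ z ∈ ℓ, z ≠ x ∧ z ≠ y := by
  obtain ⟨p, q, r, hp, hq, hr, hpq, hpr, hqr⟩ := Γ.thick_lines ℓ hℓ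
  by_cases h1 : p ≠ x ∧ p ≠ y
  · exact ⟨p, hp, h1.1, h1.2⟩
  by_cases h2 : q ≠ x ∧ q ≠ y
  · exact ⟨q, hq, h2.1, h2.2⟩
  push_neg at h1 h2
  by_cases hpx : p = x
  · subst hpx
    have hqy : q = y := h2 (Ne.symm hpq)
    subst hqy
    exact ⟨r, hr, Ne.symm hpr, Ne.symm hqr⟩
  · have hpy : p = y := h1 hpx
    subst hpy
    by_cases hqx : q = x
    · subst hqx
      exact ⟨r, hr, Ne.symm hqr, Ne.symm hpr⟩
    · exact absurd (h2 hqx) (Ne.symm hpq)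

lemma perp_singleton_hyperplane (c : Γ.P) : Γ.IsHyperplane (Γ.perp {c}) := by
  refine ⟨perp_isSubspace _, ?_, ?_⟩
  · intro h
    obtain ⟨q, hq⟩ := Γ.nondegenerate c
    have hq' : ¬ Γ.Collin c q := hq
    have : q ∈ Γ.perp {c} := h ▸ Set.mem_univ q
    exact hq' (mem_perp_singleton.1 this).symm
  · intro ℓ hℓ
    by_cases hc : c ∈ ℓ
    · exact ⟨c, hc, mem_perp_singleton.2 (collin_refl c)⟩
    rcases Γ.one_or_all ℓ hℓ c hc with ⟨z, ⟨hz, hcz⟩, -⟩ | hall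
    · exact ⟨z, hz, mem_perp_singleton.2 (Collin.symm hcz)⟩
    · obtain ⟨p, hp⟩ := line_nonempty hℓ
      exact ⟨p, hp, mem_perp_singleton.2 (Collin.symm (hall p hp))⟩


lemma exists_max_clique {C : Set Γ.P} (hC : ∀ x ∈ C, ∀ y ∈ C, Γ.Collin x y) :
    ∃ M, Γ.IsGenerator M ∧ C ⊆ M := by
  have hchainub : ∀ c ⊆ {D : Set Γ.P | ∀ x ∈ D, ∀ y ∈ D, Γ.Collin x y},
      IsChain (· ⊆ ·) c → c.Nonempty →
      ∃ ub ∈ {D : Set Γ.P | ∀ x ∈ D, ∀ y ∈ D, Γ.Collin x y}, ∀ s ∈ c, s ⊆ ub := by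
    intro c hcS hchain hne
    refine ⟨⋃₀ c, ?_, fun s hs => Set.subset_sUnion_of_mem hs⟩
    rintro x ⟨s, hs, hxs⟩ y ⟨t, ht, hyt⟩
    rcases hchain.total hs ht with h | h
    · exact hcS ht x (h hxs) y hyt
    · exact hcS hs x hxs y (h hyt)
  obtain ⟨M, hCM, hmax⟩ := zorn_subset_nonempty
      {D : Set Γ.P | ∀ x ∈ D, ∀ y ∈ D, Γ.Collin x y} hchainub C hC
  have hMc : ∀ x ∈ M, ∀ y ∈ M, Γ.Collin x y := hmax.1
  have hsub : Γ.IsSubspace M := by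
    intro ℓ hℓ x hx y hy hxy
    have hall : ∀ w ∈ M, ∀ z ∈ ℓ, Γ.Collin w z := fun w hw =>
      two_implies_all hℓ hx.1 hy.1 hxy (hMc w hw x hx.2) (hMc w hw y hy.2)
    have hgrow : (M ∪ ℓ) ∈ {D : Set Γ.P | ∀ x ∈ D, ∀ y ∈ D, Γ.Collin x y} := by
      intro w hw v hv
      rcases hw with hw | hw <;> rcases hv with hv | hv
      · exact hMc w hw v hv
      · exact hall w hw v hv
      · exact (hall v hv w hw).symm
      · exact collin_of_mem hℓ hw hv
    have hle : M ∪ ℓ ⊆ M := hmax.2 hgrow Set.subset_union_left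
    exact fun z hz => hle (Set.mem_union_right M hz)
  refine ⟨M, ⟨⟨hsub, hMc⟩, ?_⟩, hCM⟩
  intro X hX hMX
  exact Set.Subset.antisymm (hmax.2 hX.2 hMX) hMX

lemma gen_absorb {M : Set Γ.P} (hM : Γ.IsGenerator M) {y : Γ.P}
    (hy : ∀ m ∈ M, Γ.Collin y m) : y ∈ M := by
  have hclique : ∀ u ∈ insert y M, ∀ v ∈ insert y M, Γ.Collin u v := by
    intro u hu v hv
    rcases Set.mem_insert_iff.1 hu with h1 | h1 <;> rcases Set.mem_insert_iff.1 hv with h2 | h2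
    · subst h1; subst h2; exact collin_refl _
    · subst h1; exact hy v h2
    · subst h2; exact (hy u h1).symm
    · exact hM.1.2 u h1 v h2
  obtain ⟨M2, hM2, hsub⟩ := exists_max_clique hclique
  have hEq : M2 = M := hM.2 M2 hM2.1 (fun m hm => hsub (Set.mem_insert_of_mem y hm))
  rw [← hEq]
  exact hsub (Set.mem_insert y M)

lemma hyperplane_max {H₀ T : Set Γ.P} (hH₀ : Γ.IsHyperplane H₀) (hT : Γ.IsSubspace T)
    (hsub : H₀ ⊆ T) {x : Γ.P} (hxT : x ∈ T) (hxH : x ∉ H₀) : ∀ p : Γ.P, p ∈ T := by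
  have absorb : ∀ y ∈ T, y ∉ H₀ → ∀ q, Γ.Collin q y → q ∈ T := by
    intro y hyT hyH q hqy
    rcases eq_or_ne q y with rfl | hne
    · exact hyT
    obtain ⟨ℓ, hℓ, hq, hy⟩ := line_exists hqy hne
    obtain ⟨z, hz, hzH⟩ := hH₀.2.2 ℓ hℓ
    have hzy : z ≠ y := fun h => hyH (h ▸ hzH)
    exact subspace_line_subset hT hℓ hz (hsub hzH) hy hyT hzy hq
  intro p
  by_cases hpH : p ∈ H₀
  · exact hsub hpH
  by_cases hpx : Γ.Collin p x
  · exact absorb x hxT hxH p hpx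
  obtain ⟨m, hm, hxm⟩ := Γ.point_on_line x
  obtain ⟨w, hwm, hpw, hwu⟩ := proj hm hxm hpx
  have hwcx : Γ.Collin w x := collin_of_mem hm hwm hxm
  by_cases hwH : w ∈ H₀
  · have hpw_ne : p ≠ w := fun h => hpH (h ▸ hwH)
    obtain ⟨ℓpw, hℓpw, hpℓ, hwℓ⟩ := line_exists hpw hpw_ne
    have huniqpw : ∀ z ∈ ℓpw, z ∈ H₀ → z = w := fun z hz hzH =>
      eq_of_mem_subspace hH₀.1 hℓpw hpℓ hpH hz hzH hwℓ hwH
    have huniqm : ∀ z ∈ m, z ∈ H₀ → z = w := fun z hz hzH =>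
      eq_of_mem_subspace hH₀.1 hm hxm hxH hz hzH hwm hwH
    have he : ∃ e, e ∉ H₀ ∧ ¬ Γ.Collin e w := by
      by_contra hcon
      push_neg at hcon
      obtain ⟨e₀, he₀⟩ := Γ.nondegenerate w
      have he₀w : ¬ Γ.Collin e₀ w := not_collin_symm he₀
      have he₀H : e₀ ∈ H₀ := by
        by_contra h
        exact he₀w (hcon e₀ h)
      obtain ⟨s₀, hs₀ℓ, hes₀, -⟩ := proj hℓpw hwℓ he₀w
      have hs₀w : s₀ ≠ w := fun h => he₀w (h ▸ hes₀)
      have hs₀H : s₀ ∉ H₀ := fun h => hs₀w (huniqpw s₀ hs₀ℓ h)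
      have he₀s₀ : e₀ ≠ s₀ := fun h => hs₀H (h ▸ he₀H)
      obtain ⟨n, hn, he₀n, hs₀n⟩ := line_exists hes₀ he₀s₀
      obtain ⟨t₀, ht₀n, ht₀e, ht₀s⟩ := third_point hn e₀ s₀
      have ht₀H : t₀ ∉ H₀ := fun h =>
        ht₀e (eq_of_mem_subspace hH₀.1 hn hs₀n hs₀H ht₀n h he₀n he₀H)
      have h1 : Γ.Collin w s₀ := (hcon s₀ hs₀H).symm
      have h2 : Γ.Collin w t₀ := (hcon t₀ ht₀H).symm
      have hfin := two_implies_all hn hs₀n ht₀n (Ne.symm ht₀s) h1 h2 e₀ he₀n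
      exact he₀w hfin.symm
    obtain ⟨e, heH, hew⟩ := he
    obtain ⟨s, hsℓ, hes, -⟩ := proj hℓpw hwℓ hew
    have hsw : s ≠ w := fun h => hew (h ▸ hes)
    have hsH : s ∉ H₀ := fun h => hsw (huniqpw s hsℓ h)
    obtain ⟨r, hrm, her, -⟩ := proj hm hwm hew
    have hrw : r ≠ w := fun h => hew (h ▸ her)
    have hrH : r ∉ H₀ := fun h => hrw (huniqm r hrm h)
    have hrT : r ∈ T := absorb x hxT hxH r (collin_of_mem hm hrm hxm)
    have heT : e ∈ T := absorb r hrT hrH e her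
    have hsT : s ∈ T := absorb e heT heH s hes.symm
    exact absorb s hsT hsH p (collin_of_mem hℓpw hpℓ hsℓ)
  · have hwT : w ∈ T := absorb x hxT hxH w hwcx
    exact absorb w hwT hwH p hpw


lemma lem_z {H : Set Γ.P} (hHs : Γ.IsSubspace H) {a b : Γ.P} (hab : ¬ Γ.Collin a b)
    (hQH : Γ.perp {a, b} ⊆ H) {z : Γ.P} (hzH : z ∈ H) (hza : Γ.Collin z a)
    (hzb : ¬ Γ.Collin z b) (hzane : z ≠ a) : a ∈ H := by
  obtain ⟨m, hm, hzm, ham⟩ := line_exists hza hzane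
  obtain ⟨w, hwm, hbw, -⟩ := proj hm hzm (not_collin_symm hzb)
  have hwz : w ≠ z := by rintro rfl; exact hzb hbw.symm
  have hwa : Γ.Collin w a := collin_of_mem hm hwm ham
  have hwQ : w ∈ Γ.perp {a, b} := mem_perp_pair.2 ⟨hwa, hbw.symm⟩
  exact subspace_line_subset hHs hm hwm (hQH hwQ) hzm hzH hwz ham

lemma perp_sub_of_mem {H : Set Γ.P} (hHs : Γ.IsSubspace H) {a b : Γ.P} (hab : ¬ Γ.Collin a b)
    (hQH : Γ.perp {a, b} ⊆ H) (haH : a ∈ H) : Γ.perp {a} ⊆ H := by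
  intro y hy
  have hya : Γ.Collin y a := mem_perp_singleton.1 hy
  rcases eq_or_ne y a with rfl | hne
  · exact haH
  obtain ⟨ℓ, hℓ, hyℓ, haℓ⟩ := line_exists hya hne
  obtain ⟨zb, hzbℓ, hbzb, -⟩ := proj hℓ haℓ (not_collin_symm hab)
  have hzba : zb ≠ a := by rintro rfl; exact hab hbzb.symm
  have hzbQ : zb ∈ Γ.perp {a, b} := mem_perp_pair.2 ⟨collin_of_mem hℓ hzbℓ haℓ, hbzb.symm⟩
  exact subspace_line_subset hHs hℓ haℓ haH hzbℓ (hQH hzbQ) (Ne.symm hzba) hyℓ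

lemma not_both_mem {H : Set Γ.P} (hH : Γ.IsHyperplane H) {a b : Γ.P} (hab : ¬ Γ.Collin a b)
    (hQH : Γ.perp {a, b} ⊆ H) : a ∉ H ∨ b ∉ H := by
  by_contra hcon
  push_neg at hcon
  have h1 : Γ.perp {a} ⊆ H := perp_sub_of_mem hH.1 hab hQH hcon.1
  have hbn : b ∉ Γ.perp {a} := fun h => hab (mem_perp_singleton.1 h).symm
  exact hH.2.1 (Set.eq_univ_of_forall
    (hyperplane_max (perp_singleton_hyperplane a) hH.1 h1 hcon.2 hbn))

lemma rad_sub {a b c d : Γ.P} (hab : ¬ Γ.Collin a b) (hca : Γ.Collin c a)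
    (hc : ∀ q, Γ.Collin q a → Γ.Collin q b → Γ.Collin c q)
    (hda : Γ.Collin d a) (hdb : ¬ Γ.Collin d b) (hcd : ¬ Γ.Collin c d) : False := by
  have hdna : d ≠ a := by rintro rfl; exact hcd hca
  obtain ⟨m, hm, hdm, ham⟩ := line_exists hda hdna
  obtain ⟨w, hwm, hbw, -⟩ := proj hm hdm (not_collin_symm hdb)
  have hwa : Γ.Collin w a := collin_of_mem hm hwm ham
  have hcw : Γ.Collin c w := hc w hwa hbw.symm
  obtain ⟨z, hzm, hcz, hu⟩ := proj hm hdm hcd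
  have h1 : a = z := hu a ham hca
  have h2 : w = z := hu w hwm hcw
  have hwna : w ≠ a := by rintro rfl; exact hab hbw.symm
  exact hwna (h2.trans h1.symm)

lemma rad_impossible {a b c : Γ.P} (hab : ¬ Γ.Collin a b) (hcQ : c ∈ Γ.perp {a, b})
    (hcQp : ∀ q, Γ.Collin q a → Γ.Collin q b → Γ.Collin c q) : False := by
  obtain ⟨hca, hcb⟩ := mem_perp_pair.1 hcQ
  obtain ⟨d, hd⟩ := Γ.nondegenerate c
  have hcd : ¬ Γ.Collin c d := hd
  have hcQp' : ∀ q, Γ.Collin q b → Γ.Collin q a → Γ.Collin c q := fun q h1 h2 => hcQp q h2 h1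
  by_cases hda : Γ.Collin d a
  · by_cases hdb : Γ.Collin d b
    · exact hcd (hcQp d hda hdb)
    · exact rad_sub hab hca hcQp hda hdb hcd
  · by_cases hdb : Γ.Collin d b
    · exact rad_sub (not_collin_symm hab) hcb hcQp' hdb hda hcd
    · have hane : a ≠ c := by rintro rfl; exact hab hcb
      obtain ⟨m, hm, ham, hcm⟩ := line_exists hca.symm hane
      have hdm : d ∉ m := fun h => hda (collin_of_mem hm h ham)
      obtain ⟨g, hgm, hdg, -⟩ := proj hm ham hda
      have hga : Γ.Collin g a := collin_of_mem hm hgm ham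
      have hgc : Γ.Collin g c := collin_of_mem hm hgm hcm
      have hgne_c : g ≠ c := by rintro rfl; exact hcd hdg.symm
      obtain ⟨z, hzm, hbz, hbu⟩ := proj hm ham (not_collin_symm hab)
      have hzc : c = z := hbu c hcm hcb.symm
      have hbg : ¬ Γ.Collin b g := fun h => hgne_c ((hbu g hgm h).trans hzc.symm)
      have hgd_ne : g ≠ d := fun h => hdm (h ▸ hgm)
      obtain ⟨n, hn, hgn, hdn⟩ := line_exists hdg.symm hgd_ne
      obtain ⟨h₁, hh₁n, hbh₁, -⟩ := proj hn hdn (not_collin_symm hdb)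
      have hh₁g : h₁ ≠ g := by rintro rfl; exact hbg hbh₁
      obtain ⟨za, hzan, haza, hau⟩ := proj hn hdn (not_collin_symm hda)
      have hgza : g = za := hau g hgn hga.symm
      have hah₁ : ¬ Γ.Collin a h₁ := fun h => hh₁g ((hau h₁ hh₁n h).trans hgza.symm)
      obtain ⟨zc, hzcn, hczc, hcu⟩ := proj hn hdn hcd
      have hgzc : g = zc := hcu g hgn hgc.symm
      have hch₁ : ¬ Γ.Collin c h₁ := fun h => hh₁g ((hcu h₁ hh₁n h).trans hgzc.symm)
      exact rad_sub (not_collin_symm hab) hcb hcQp' hbh₁.symm (not_collin_symm hah₁) hch₁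

lemma eq_of_collin_biperp {a b c : Γ.P} (hab : ¬ Γ.Collin a b)
    (hc : ∀ q, Γ.Collin q a → Γ.Collin q b → Γ.Collin c q) (hca : Γ.Collin c a) : c = a := by
  by_contra hne
  obtain ⟨m, hm, hcm, ham⟩ := line_exists hca hne
  obtain ⟨z, hzm, hbz, -⟩ := proj hm ham (not_collin_symm hab)
  have hza : Γ.Collin z a := collin_of_mem hm hzm ham
  have hzne_a : z ≠ a := by rintro rfl; exact hab hbz.symm
  have hzQp : ∀ q, Γ.Collin q a → Γ.Collin q b → Γ.Collin z q := by
    intro q hqa hqb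
    have hqc : Γ.Collin q c := (hc q hqa hqb).symm
    exact (two_implies_all hm hcm ham hne hqc hqa z hzm).symm
  exact rad_impossible hab (mem_perp_pair.2 ⟨hza, hbz.symm⟩) hzQp

lemma line_meets_Q {a b c : Γ.P} (hab : ¬ Γ.Collin a b)
    (hc : ∀ q, Γ.Collin q a → Γ.Collin q b → Γ.Collin c q)
    (hca : ¬ Γ.Collin c a) (hcb : ¬ Γ.Collin c b)
    {ℓ : Set Γ.P} (hℓ : ℓ ∈ Γ.Lines) (hcℓ : c ∈ ℓ) :
    ∃ z ∈ ℓ, Γ.Collin z a ∧ Γ.Collin z b := by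
  have hbℓ : b ∉ ℓ := fun h => hcb (collin_of_mem hℓ hcℓ h)
  obtain ⟨za, hzaℓ, haza, hau⟩ := proj hℓ hcℓ (not_collin_symm hca)
  obtain ⟨zb, hzbℓ, hbzb, hbu⟩ := proj hℓ hcℓ (not_collin_symm hcb)
  rcases eq_or_ne za zb with rfl | hne
  · exact ⟨za, hzaℓ, haza.symm, hbzb.symm⟩
  · exfalso
    have hzab : ¬ Γ.Collin b za := fun h => hne (hbu za hzaℓ h)
    have hzba : ¬ Γ.Collin a zb := fun h => hne (hau zb hzbℓ h).symm
    have hbzb_ne : b ≠ zb := fun h => hbℓ (h ▸ hzbℓ)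
    obtain ⟨n, hn, hbn, hzbn⟩ := line_exists hbzb hbzb_ne
    obtain ⟨v, hvn, hav, -⟩ := proj hn hbn hab
    have hvb : Γ.Collin v b := collin_of_mem hn hvn hbn
    have hvzb : Γ.Collin v zb := collin_of_mem hn hvn hzbn
    have hvne_zb : v ≠ zb := by rintro rfl; exact hzba hav
    have hcv : Γ.Collin v c := (hc v hav.symm hvb).symm
    have hczb_ne : c ≠ zb := by rintro rfl; exact hcb hbzb.symm
    have hvza : Γ.Collin v za := two_implies_all hℓ hcℓ hzbℓ hczb_ne hcv hvzb za hzaℓ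
    have hzazb : Γ.Collin za zb := collin_of_mem hℓ hzaℓ hzbℓ
    have hfin := two_implies_all hn hzbn hvn (Ne.symm hvne_zb) hzazb hvza.symm b hbn
    exact hzab hfin.symm

lemma main_aux {Γ : PolarSpace}
    (hA : ∀ M : Set Γ.P, Γ.IsGenerator M → ∀ a b : Γ.P, ¬ Γ.Collin a b →
      Γ.IsHypOf (M ∩ Γ.perp {a, b}) M →
      (M ∩ Γ.perp (Γ.perp {a, b})).Nonempty)
    {H : Set Γ.P} (hH : Γ.IsHyperplane H) {a b : Γ.P} (hab : ¬ Γ.Collin a b)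
    (hQH : Γ.perp {a, b} ⊆ H) (hbH : b ∉ H)
    {M : Set Γ.P} (hM : Γ.IsGenerator M) (hMH : M ⊆ H) :
    ∃ c : Γ.P, c ∈ Γ.perp (Γ.perp {a, b}) ∧ H = Γ.perp {c} := by
  have hQH' : Γ.perp {b, a} ⊆ H := by rw [← perp_pair_comm]; exact hQH
  have HbQ : ∀ z ∈ H, Γ.Collin z b → z ∈ Γ.perp {a, b} := by
    intro z hzH hzb
    by_cases hza : Γ.Collin z a
    · exact mem_perp_pair.2 ⟨hza, hzb⟩
    · exfalso
      have hzb_ne : z ≠ b := by rintro rfl; exact hbH hzH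
      exact hbH (lem_z hH.1 (not_collin_symm hab) hQH' hzH hzb hza hzb_ne)
  have hypOf : Γ.IsHypOf (M ∩ Γ.perp {a, b}) M := by
    refine ⟨Set.inter_subset_left, ?_, ?_, ?_⟩
    · intro h
      have hMQ : M ⊆ Γ.perp {a, b} := by rw [← h]; exact Set.inter_subset_right
      exact hbH (hMH (gen_absorb hM (fun m hm => (mem_perp_pair.1 (hMQ hm)).2.symm)))
    · intro ℓ hℓ x hx y hy hxy
      have h1 := hM.1.1 ℓ hℓ x ⟨hx.1, hx.2.1⟩ y ⟨hy.1, hy.2.1⟩ hxy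
      have h2 := perp_isSubspace {a, b} ℓ hℓ x ⟨hx.1, hx.2.2⟩ y ⟨hy.1, hy.2.2⟩ hxy
      exact fun z hz => ⟨h1 hz, h2 hz⟩
    · intro ℓ hℓ hℓM
      by_cases hball : ∀ q ∈ ℓ, Γ.Collin b q
      · obtain ⟨p, hp⟩ := line_nonempty hℓ
        exact ⟨p, hp, hℓM hp, HbQ p (hMH (hℓM hp)) (hball p hp).symm⟩
      · push_neg at hball
        obtain ⟨q0, hq0ℓ, hbq0⟩ := hball
        obtain ⟨zb, hzbℓ, hbzb, -⟩ := proj hℓ hq0ℓ hbq0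
        exact ⟨zb, hzbℓ, hℓM hzbℓ, HbQ zb (hMH (hℓM hzbℓ)) hbzb.symm⟩
  obtain ⟨c, hcM, hcQp⟩ := hA M hM a b hab hypOf
  have hcH : c ∈ H := hMH hcM
  have hcQperp : ∀ q, Γ.Collin q a → Γ.Collin q b → Γ.Collin c q := fun q h1 h2 =>
    hcQp q (mem_perp_pair.2 ⟨h1, h2⟩)
  have key : Γ.perp {c} ⊆ H → H = Γ.perp {c} := by
    intro hsub
    apply Set.Subset.antisymm _ hsub
    intro p hp
    by_contra hpc
    exact hH.2.1 (Set.eq_univ_of_forall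
      (hyperplane_max (perp_singleton_hyperplane c) hH.1 hsub hp hpc))
  have hcb : ¬ Γ.Collin c b := fun h => rad_impossible hab (HbQ c hcH h) hcQperp
  by_cases hca : Γ.Collin c a
  · have hceq : c = a := eq_of_collin_biperp hab hcQperp hca
    refine ⟨c, hcQp, key ?_⟩
    rw [hceq]
    exact perp_sub_of_mem hH.1 hab hQH (hceq ▸ hcH)
  · refine ⟨c, hcQp, key ?_⟩
    intro y hy
    have hyc : Γ.Collin y c := mem_perp_singleton.1 hy
    rcases eq_or_ne y c with rfl | hne
    · exact hcH
    obtain ⟨ℓ, hℓ, hyℓ, hcℓ⟩ := line_exists hyc hne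
    obtain ⟨z, hzℓ, hza, hzb⟩ := line_meets_Q hab hcQperp hca hcb hℓ hcℓ
    have hzc_ne : z ≠ c := by rintro rfl; exact hca hza
    exact subspace_line_subset hH.1 hℓ hzℓ (hQH (mem_perp_pair.2 ⟨hza, hzb⟩)) hcℓ hcH hzc_ne hyℓ

end PolarSpace

/-- Let `S` be a non-degenerate thick-lined polar space of finite
rank `≥ 2` (every singular subspace lies in a generator) satisfying
property (A): for every generator `M` and non-collinear `a, b`, if `M ∩ {a,b}^⊥`
is a hyperplane of `M` then `M ∩ {a,b}^{⊥⊥} ≠ ∅`; and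
property (B): every hyperplane containing `{a,b}^⊥` for non-collinear `a, b`
contains a generator. Then `S` satisfies property (C): every hyperplane `H`
containing `{a,b}^⊥` for two non-collinear points `a, b` is singular, i.e.
`H = c^⊥` for some point `c ∈ {a,b}^{⊥⊥}`. -/
theorem stmt19 (Γ : PolarSpace)
    (hfinrank : ∀ X : Set Γ.P, Γ.IsSingular X → ∃ M, Γ.IsGenerator M ∧ X ⊆ M)
    (hA : ∀ M : Set Γ.P, Γ.IsGenerator M → ∀ a b : Γ.P, ¬ Γ.Collin a b →
      Γ.IsHypOf (M ∩ Γ.perp {a, b}) M →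
      (M ∩ Γ.perp (Γ.perp {a, b})).Nonempty)
    (hB : ∀ H : Set Γ.P, Γ.IsHyperplane H → ∀ a b : Γ.P, ¬ Γ.Collin a b →
      Γ.perp {a, b} ⊆ H → ∃ M : Set Γ.P, Γ.IsGenerator M ∧ M ⊆ H) :
    ∀ H : Set Γ.P, Γ.IsHyperplane H → ∀ a b : Γ.P, ¬ Γ.Collin a b →
      Γ.perp {a, b} ⊆ H →
      ∃ c : Γ.P, c ∈ Γ.perp (Γ.perp {a, b}) ∧ H = Γ.perp {c} := by
  intro H hH a b hab hQH
  obtain ⟨M, hM, hMH⟩ := hB H hH a b hab hQH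
  rcases PolarSpace.not_both_mem hH hab hQH with haH | hbH
  · have hQH' : Γ.perp {b, a} ⊆ H := by rw [← PolarSpace.perp_pair_comm]; exact hQH
    obtain ⟨c, hc1, hc2⟩ := PolarSpace.main_aux hA hH (PolarSpace.not_collin_symm hab)
      hQH' haH hM hMH
    refine ⟨c, ?_, hc2⟩
    rw [show Γ.perp {a, b} = Γ.perp {b, a} from PolarSpace.perp_pair_comm a b]
    exact hc1
  · exact PolarSpace.main_aux hA hH hab hQH hbH hM hMH
end
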